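/- Let H be a finite-dimensional complex inner product space, ψ a unit vector, and P₁, ..., P_L orthogonal projections, with Q_i = I − P_i. Then 1 − ‖P_L⋯P₁ψ‖² ≤ −‖Q_L ψ‖² + 2·(1 − √(⟨ψ, P_L ψ⟩)·√(⟨ψ, P₁⋯P_{L-1}P_LP_{L-1}⋯P₁ ψ⟩)). -/
import Mathlib


open scoped InnerProductSpace

/-- `descComp P k = P k ∘ P (k-1) ∘ ⋯ ∘ P 1`, empty composition is the identity. -/
def descComp {H : Type*} [AddCommGroup H] [Module ℂ H]
    (P : ℕ → (H →ₗ[ℂ] H)) : ℕ → (H →ₗ[ℂ] H)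
  | 0 => 1
  | k + 1 => P (k + 1) ∘ₗ descComp P k

/-- `ascComp P k = P 1 ∘ P 2 ∘ ⋯ ∘ P k`, empty composition is the identity. -/
def ascComp {H : Type*} [AddCommGroup H] [Module ℂ H]
    (P : ℕ → (H →ₗ[ℂ] H)) : ℕ → (H →ₗ[ℂ] H)
  | 0 => 1
  | k + 1 => ascComp P k ∘ₗ P (k + 1)

lemma asc_adjoint {H : Type*} [NormedAddCommGroup H] [InnerProductSpace ℂ H]
    (P : ℕ → (H →ₗ[ℂ] H)) (k : ℕ) :
    (∀ i ∈ Finset.Icc 1 k, (P i).IsSymmetric) →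
      ∀ x y : H, ⟪x, ascComp P k y⟫_ℂ = ⟪descComp P k x, y⟫_ℂ := by
  induction k with
  | zero => intro _ x y; simp [ascComp, descComp]
  | succ n ih =>
    intro hsym x y
    have h1 : ∀ i ∈ Finset.Icc 1 n, (P i).IsSymmetric := fun i hi => by
      have := Finset.mem_Icc.mp hi
      exact hsym i (Finset.mem_Icc.mpr ⟨this.1, this.2.trans (Nat.le_succ n)⟩)
    have hP := hsym (n+1) (Finset.mem_Icc.mpr ⟨Nat.succ_le_succ (Nat.zero_le n), le_refl _⟩)
    simp only [ascComp, descComp, LinearMap.comp_apply]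
    rw [ih h1, ← hP]

theorem stmt15 {H : Type*} [NormedAddCommGroup H] [InnerProductSpace ℂ H]
    [FiniteDimensional ℂ H] (L : ℕ) (hL : 1 ≤ L) (P : ℕ → (H →ₗ[ℂ] H))
    (hsym : ∀ i ∈ Finset.Icc 1 L, (P i).IsSymmetric)
    (hidem : ∀ i ∈ Finset.Icc 1 L, P i ∘ₗ P i = P i)
    (ψ : H) (hψ : ‖ψ‖ = 1) :
    1 - ‖descComp P L ψ‖ ^ 2
      ≤ -‖(1 - P L) ψ‖ ^ 2
        + 2 * (1 - Real.sqrt ((⟪ψ, P L ψ⟫_ℂ).re) *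
            Real.sqrt
              ((⟪ψ, (ascComp P (L - 1) ∘ₗ P L ∘ₗ descComp P (L - 1)) ψ⟫_ℂ).re)) := by
  obtain ⟨M, rfl⟩ : ∃ M, L = M + 1 := ⟨L - 1, (Nat.succ_pred_eq_of_pos hL).symm⟩
  have hmem : M + 1 ∈ Finset.Icc 1 (M + 1) :=
    Finset.mem_Icc.mpr ⟨Nat.succ_le_succ (Nat.zero_le M), le_refl _⟩
  have hPsym := hsym (M + 1) hmem
  have hPid := hidem (M + 1) hmem
  set φ : H := descComp P M ψ with hφ
  have hid : ∀ x : H, P (M + 1) (P (M + 1) x) = P (M + 1) x := fun x =>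
    congrArg (fun T : H →ₗ[ℂ] H => T x) hPid
  -- general: re ⟪x, P(M+1) x⟫ = ‖P(M+1) x‖^2
  have key : ∀ x : H, (⟪x, P (M + 1) x⟫_ℂ).re = ‖P (M + 1) x‖ ^ 2 := by
    intro x
    have : ⟪x, P (M + 1) x⟫_ℂ = ⟪P (M + 1) x, P (M + 1) x⟫_ℂ := by
      conv_lhs => rw [← hid x]
      rw [← hPsym]
    rw [this, ← @inner_self_eq_norm_sq ℂ]
    simp [RCLike.re_to_complex]
  -- Fact B
  have hsym' : ∀ i ∈ Finset.Icc 1 M, (P i).IsSymmetric := fun i hi => by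
    have := Finset.mem_Icc.mp hi
    exact hsym i (Finset.mem_Icc.mpr ⟨this.1, this.2.trans (Nat.le_succ M)⟩)
  have hB : (⟪ψ, (ascComp P ((M + 1) - 1) ∘ₗ P (M + 1) ∘ₗ descComp P ((M + 1) - 1)) ψ⟫_ℂ).re
      = ‖P (M + 1) φ‖ ^ 2 := by
    simp only [Nat.add_sub_cancel, LinearMap.comp_apply, ← hφ]
    rw [asc_adjoint P M hsym' ψ (P (M+1) φ), ← hφ, key φ]
  -- Fact C : ‖(1 - P(M+1)) ψ‖^2 = 1 - ‖P(M+1) ψ‖^2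
  have hC : ‖(1 - P (M + 1)) ψ‖ ^ 2 = 1 - ‖P (M + 1) ψ‖ ^ 2 := by
    have h1 : (1 - P (M + 1)) ψ = ψ - P (M + 1) ψ := by
      simp [LinearMap.sub_apply]
    have hk := key ψ
    rw [h1, @norm_sub_sq ℂ, hψ]
    simp only [RCLike.re_to_complex] at *
    rw [hk]; ring
  have hD : descComp P (M + 1) ψ = P (M + 1) φ := rfl
  rw [hD, hC, hB, key ψ, Real.sqrt_sq (norm_nonneg _), Real.sqrt_sq (norm_nonneg _)]
  nlinarith [sq_nonneg (‖P (M + 1) ψ‖ - ‖P (M + 1) φ‖), norm_nonneg (P (M+1) ψ), norm_nonneg (P (M+1) φ)]
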